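/- arXiv:1408.4841 — 3 statements merged into one kernel-verified Lean document; each statement's English description precedes it below -/
import Mathlib

section
/- Let f(τ) = (1−τ) log₂(1 + Aτ/(1−τ)) for τ ∈ [0,1), with A > 0. Then f is concave on [0,1), and its unique maximizer is τ* = (z*−1)/(A + z*−1), where z* > 1 is the unique solution of z ln z − z + 1 = A. -/
open Real Set

/-- concavity of the natural-log version -/
lemma F_concave_aux (A : ℝ) (hA : 0 < A) :
    ConcaveOn ℝ (Set.Ico 0 1) (fun τ : ℝ => (1 - τ) * Real.log (1 + A * τ / (1 - τ))) := by
  refine ⟨convex_Ico 0 1, ?_⟩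
  intro τ1 h1 τ2 h2 a b ha hb hab
  simp only [smul_eq_mul]
  rcases ha.eq_or_lt with rfl | ha'
  · have : b = 1 := by linarith
    subst this; simp
  rcases hb.eq_or_lt with rfl | hb'
  · have : a = 1 := by linarith
    subst this; simp
  obtain ⟨h10, h11⟩ := h1
  obtain ⟨h20, h21⟩ := h2
  have hx1 : 0 < 1 - τ1 := by linarith
  have hx2 : 0 < 1 - τ2 := by linarith
  have hu0 : 0 < a * (1 - τ1) := mul_pos ha' hx1
  have hv0 : 0 < b * (1 - τ2) := mul_pos hb' hx2
  set u := a * (1 - τ1) with hu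
  set v := b * (1 - τ2) with hv
  have huv : u + v = 1 - (a * τ1 + b * τ2) := by
    simp only [hu, hv]; nlinarith [hab]
  have huv0 : 0 < u + v := by linarith
  set w1 := 1 + A * τ1 / (1 - τ1) with hw1
  set w2 := 1 + A * τ2 / (1 - τ2) with hw2
  have hw1pos : 0 < w1 := by
    have : 0 ≤ A * τ1 / (1 - τ1) := div_nonneg (mul_nonneg hA.le h10) hx1.le
    rw [hw1]; linarith
  have hw2pos : 0 < w2 := by
    have : 0 ≤ A * τ2 / (1 - τ2) := div_nonneg (mul_nonneg hA.le h20) hx2.le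
    rw [hw2]; linarith
  set τ := a * τ1 + b * τ2 with hτdef
  have hxτ : 0 < 1 - τ := by rw [← huv]; exact huv0
  set wτ := 1 + A * τ / (1 - τ) with hwτ
  have e1 : (1 - τ1) * w1 = (1 - τ1) + A * τ1 := by
    rw [hw1]; field_simp
  have e2 : (1 - τ2) * w2 = (1 - τ2) + A * τ2 := by
    rw [hw2]; field_simp
  have e3 : (1 - τ) * wτ = (1 - τ) + A * τ := by
    rw [hwτ]; field_simp
  have eτ : (u + v) * wτ = u * w1 + v * w2 := by
    rw [huv, e3]
    simp only [hu, hv]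
    nlinarith [e1, e2, hab]
  -- apply concavity of log
  have hcc := strictConcaveOn_log_Ioi.concaveOn.2 (mem_Ioi.2 hw1pos) (mem_Ioi.2 hw2pos)
      (le_of_lt (div_pos hu0 huv0)) (le_of_lt (div_pos hv0 huv0))
      (by field_simp)
  simp only [smul_eq_mul] at hcc
  have harg : u / (u + v) * w1 + v / (u + v) * w2 = wτ := by
    field_simp
    linarith [eτ]
  rw [harg] at hcc
  have := mul_le_mul_of_nonneg_left hcc huv0.le
  calc a * ((1 - τ1) * Real.log w1) + b * ((1 - τ2) * Real.log w2)
      = (u + v) * (u / (u + v) * Real.log w1 + v / (u + v) * Real.log w2) := by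
        field_simp; ring
    _ ≤ (u + v) * Real.log wτ := this
    _ = (1 - τ) * Real.log wτ := by rw [huv]

/-- tangent line bound: F τ ≤ A/z, strict unless τ = τ* -/
lemma F_max_aux (A z : ℝ) (hA : 0 < A) (hz : 1 < z)
    (hzeq : z * Real.log z - z + 1 = A) (τ : ℝ) (h0 : 0 ≤ τ) (h1 : τ < 1) :
    (1 - τ) * Real.log (1 + A * τ / (1 - τ)) ≤ A / z ∧
    (τ ≠ (z - 1) / (A + z - 1) →
      (1 - τ) * Real.log (1 + A * τ / (1 - τ)) < A / z) := by
  have hx : 0 < 1 - τ := by linarith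
  have hz0 : 0 < z := by linarith
  have hD : 0 < A + z - 1 := by linarith
  set w := 1 + A * τ / (1 - τ) with hw
  have hw0 : 0 < w := by
    have : 0 ≤ A * τ / (1 - τ) := div_nonneg (mul_nonneg hA.le h0) hx.le
    rw [hw]; linarith
  have hxw : (1 - τ) * w = (1 - τ) + A * τ := by rw [hw]; field_simp
  have hzlz : z * Real.log z = A + z - 1 := by linarith
  have hzw : z * (w / z) = w := by field_simp
  have h5 : (1 - τ) * z * (w / z - 1) = (1 - τ) + A * τ - (1 - τ) * z := by
    linear_combination (1 - τ) * hzw + hxw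
  have h6 : (1 - τ) * (z * Real.log z) = (1 - τ) * (A + z - 1) := by rw [hzlz]
  constructor
  · rw [le_div_iff₀ hz0]
    have key : (1 - τ) * z * (Real.log w - Real.log z) ≤ (1 - τ) * z * (w / z - 1) := by
      apply mul_le_mul_of_nonneg_left _ (by positivity)
      rw [← Real.log_div hw0.ne' hz0.ne']
      exact Real.log_le_sub_one_of_pos (div_pos hw0 hz0)
    nlinarith [key, h5, h6]
  · intro hne
    have hwz : w ≠ z := by
      intro hwzeq
      apply hne
      have : A * τ / (1 - τ) = z - 1 := by
        rw [hw] at hwzeq; linarith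
      have h7 : A * τ = (z - 1) * (1 - τ) := by
        rw [div_eq_iff hx.ne'] at this; linarith [this]
      rw [eq_div_iff hD.ne']
      nlinarith [h7]
    rw [lt_div_iff₀ hz0]
    have key : (1 - τ) * z * (Real.log w - Real.log z) < (1 - τ) * z * (w / z - 1) := by
      apply mul_lt_mul_of_pos_left _ (by positivity)
      rw [← Real.log_div hw0.ne' hz0.ne']
      apply Real.log_lt_sub_one_of_pos (div_pos hw0 hz0)
      simp only [ne_eq, div_eq_one_iff_eq hz0.ne']
      exact hwz
    nlinarith [key, h5, h6]


/-- f(τ) = (1−τ) log₂(1 + Aτ/(1−τ)) is concave on [0,1) and its unique maximizer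
is τ* = (z*−1)/(A + z*−1), where z* > 1 solves z ln z − z + 1 = A. -/
theorem ec_throughput_concave_and_unique_maximizer
    (A z τstar : ℝ) (hA : 0 < A) (hz : 1 < z)
    (hzeq : z * Real.log z - z + 1 = A)
    (hτ : τstar = (z - 1) / (A + z - 1)) :
    ConcaveOn ℝ (Set.Ico 0 1) (fun τ : ℝ => (1 - τ) * Real.logb 2 (1 + A * τ / (1 - τ))) ∧
    τstar ∈ Set.Ico (0:ℝ) 1 ∧
    IsMaxOn (fun τ : ℝ => (1 - τ) * Real.logb 2 (1 + A * τ / (1 - τ))) (Set.Ico 0 1) τstar ∧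
    (∀ τ ∈ Set.Ico (0:ℝ) 1,
      (1 - τ) * Real.logb 2 (1 + A * τ / (1 - τ)) =
        (1 - τstar) * Real.logb 2 (1 + A * τstar / (1 - τstar)) → τ = τstar) := by
  have hlog2 : 0 < Real.log 2 := Real.log_pos one_lt_two
  have hz0 : 0 < z := by linarith
  have hD : 0 < A + z - 1 := by linarith
  have hzlz : z * Real.log z = A + z - 1 := by linarith
  -- facts about τstar
  have hτ0 : 0 ≤ τstar := by
    rw [hτ]; exact div_nonneg (by linarith) hD.le
  have hτ1 : τstar < 1 := by
    rw [hτ, div_lt_one hD]; linarith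
  have hxs : 0 < 1 - τstar := by linarith
  have hws : 1 + A * τstar / (1 - τstar) = z := by
    rw [hτ]
    have h1 : (1:ℝ) - (z - 1) / (A + z - 1) = A / (A + z - 1) := by
      field_simp; ring
    rw [h1]
    field_simp; ring
  -- value of F at τstar
  have hFstar : (1 - τstar) * Real.log (1 + A * τstar / (1 - τstar)) = A / z := by
    rw [hws, hτ]
    have h1 : (1:ℝ) - (z - 1) / (A + z - 1) = A / (A + z - 1) := by field_simp; ring
    rw [h1]
    rw [div_mul_eq_mul_div, div_eq_div_iff hD.ne' hz0.ne']
    linear_combination A * hzlz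
  -- relation between logb and log versions
  have hfF : ∀ τ : ℝ, (1 - τ) * Real.logb 2 (1 + A * τ / (1 - τ)) =
      (Real.log 2)⁻¹ * ((1 - τ) * Real.log (1 + A * τ / (1 - τ))) := by
    intro τ; rw [Real.logb]; ring
  refine ⟨?_, ⟨hτ0, hτ1⟩, ?_, ?_⟩
  · have hc := (F_concave_aux A hA).smul (c := (Real.log 2)⁻¹) (by positivity)
    have heq : (fun τ : ℝ => (1 - τ) * Real.logb 2 (1 + A * τ / (1 - τ))) =
        (Real.log 2)⁻¹ • (fun τ : ℝ => (1 - τ) * Real.log (1 + A * τ / (1 - τ))) := by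
      funext τ
      simp only [Pi.smul_apply, smul_eq_mul]
      exact hfF τ
    rw [heq]
    exact hc
  · rw [isMaxOn_iff]
    intro τ hmem
    rw [hfF τ, hfF τstar, hFstar]
    apply mul_le_mul_of_nonneg_left _ (by positivity)
    exact (F_max_aux A z hA hz hzeq τ hmem.1 hmem.2).1
  · intro τ hmem heq
    by_contra hne
    have hne' : τ ≠ (z - 1) / (A + z - 1) := by rw [← hτ]; exact hne
    have hlt := (F_max_aux A z hA hz hzeq τ hmem.1 hmem.2).2 hne'
    rw [hfF τ, hfF τstar, hFstar] at heq
    have := mul_left_cancel₀ (inv_ne_zero hlog2.ne') heq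
    rw [this] at hlt
    exact lt_irrefl _ hlt
end

section
/- For the optimization problem maximize (1−τ) log₂(1 + Aτ/(1−τ)) subject to 0 ≤ τ ≤ μ, with A > 0 and 0 < μ ≤ 1: if the unconstrained maximizer τ• = (z*−1)/(A+z*−1) satisfies τ• ≤ μ then the optimum is attained at τ = τ•, and if τ• > μ then the optimum is attained at τ = μ. -/
open Real Set

private lemma phi_hasDeriv (x : ℝ) (hx : x ≠ 0) :
    HasDerivAt (fun u : ℝ => u - u * Real.log u) (-Real.log x) x := by
  have h := (hasDerivAt_id x).sub ((hasDerivAt_id x).mul (Real.hasDerivAt_log hx))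
  refine h.congr_deriv ?_
  simp only [id, one_mul, mul_inv_cancel₀ hx]; ring

private lemma phi_antitone : AntitoneOn (fun u : ℝ => u - u * Real.log u) (Set.Ici 1) := by
  apply antitoneOn_of_deriv_nonpos (convex_Ici 1)
  · intro x hx
    have hx0 : x ≠ 0 := by
      simp only [mem_Ici] at hx; linarith
    exact ((phi_hasDeriv x hx0).continuousAt).continuousWithinAt
  · intro x hx
    rw [interior_Ici, mem_Ioi] at hx
    exact ((phi_hasDeriv x (by linarith)).differentiableAt).differentiableWithinAt
  · intro x hx
    rw [interior_Ici, mem_Ioi] at hx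
    rw [(phi_hasDeriv x (by linarith)).deriv]
    exact neg_nonpos.mpr (Real.log_nonneg hx.le)

private lemma g_hasDeriv (A x : ℝ) (h1 : x < 1) (hw : 1 + A * x / (1 - x) ≠ 0) :
    HasDerivAt (fun τ : ℝ => (1 - τ) * Real.log (1 + A * τ / (1 - τ)))
      (A / ((1 - x) * (1 + A * x / (1 - x))) - Real.log (1 + A * x / (1 - x))) x := by
  have hne : (1 : ℝ) - x ≠ 0 := by linarith
  have h₁ : HasDerivAt (fun τ : ℝ => 1 - τ) (-1) x := by
    simpa using (hasDerivAt_id x).const_sub 1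
  have h₂ : HasDerivAt (fun τ : ℝ => A * τ) A x := by
    simpa using (hasDerivAt_id x).const_mul A
  have h₃ := h₂.div h₁ hne
  have h₄ := (h₃.const_add 1).log hw
  have h₅ := h₁.mul h₄
  have hw2 : 1 - x + A * x ≠ 0 := by
    have h' : (1 - x) * (1 + A * x / (1 - x)) = 1 - x + A * x := by
      field_simp
    rw [← h']
    exact mul_ne_zero hne hw
  have hE : (1 - x) * ((A * (1 - x) - A * x * -1) / (1 - x) ^ 2 / (1 + A * x / (1 - x)))
      = A / ((1 - x) * (1 + A * x / (1 - x))) := by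
    field_simp
    ring
  refine h₅.congr_deriv ?_
  show -1 * Real.log (1 + A * x / (1 - x)) + (1 - x) * ((A * (1 - x) - A * x * -1) / (1 - x) ^ 2 / (1 + A * x / (1 - x))) = _
  rw [hE]
  ring

/-- Constrained optimal time allocation for the E-C protocol (Proposition 1):
maximizing (1−τ) log₂(1 + Aτ/(1−τ)) over 0 ≤ τ ≤ μ, the optimum is attained
at the unconstrained maximizer τ• if τ• ≤ μ, and at μ otherwise. -/
theorem ec_constrained_optimal_time
    (A μ z τbullet : ℝ) (hA : 0 < A) (hμ0 : 0 < μ) (hμ1 : μ ≤ 1)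
    (hz : 1 < z) (hzeq : z * Real.log z - z + 1 = A)
    (hτ : τbullet = (z - 1) / (A + z - 1)) :
    (τbullet ≤ μ →
      IsMaxOn (fun τ : ℝ => (1 - τ) * Real.logb 2 (1 + A * τ / (1 - τ)))
        (Set.Icc 0 μ) τbullet) ∧
    (μ < τbullet →
      IsMaxOn (fun τ : ℝ => (1 - τ) * Real.logb 2 (1 + A * τ / (1 - τ)))
        (Set.Icc 0 μ) μ) := by
  set g : ℝ → ℝ := fun τ => (1 - τ) * Real.log (1 + A * τ / (1 - τ)) with hg
  have hAz : 0 < A + z - 1 := by linarith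
  have hτ0 : 0 < τbullet := by rw [hτ]; exact div_pos (by linarith) hAz
  have hτ1 : τbullet < 1 := by rw [hτ, div_lt_one hAz]; linarith
  have hwge : ∀ x : ℝ, 0 ≤ x → x < 1 → 1 ≤ 1 + A * x / (1 - x) := by
    intro x h0 h1
    have : 0 ≤ A * x / (1 - x) := div_nonneg (by positivity) (by linarith)
    linarith
  have hphiz : z - z * Real.log z = 1 - A := by linarith
  -- derivative sign
  have hderiv_sign : ∀ x : ℝ, 0 ≤ x → x < 1 →
      (x ≤ τbullet → 0 ≤ A / ((1 - x) * (1 + A * x / (1 - x))) - Real.log (1 + A * x / (1 - x))) ∧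
      (τbullet ≤ x → A / ((1 - x) * (1 + A * x / (1 - x))) - Real.log (1 + A * x / (1 - x)) ≤ 0) := by
    intro x h0 h1
    have h1x : 0 < 1 - x := by linarith
    set u : ℝ := 1 + A * x / (1 - x) with hu
    have hu1 : 1 ≤ u := hwge x h0 h1
    have hupos : 0 < u := by linarith
    have hkey : (1 - x) * u = 1 - x + A * x := by
      rw [hu]; field_simp
    constructor
    · intro hxle
      have hx' : x * (A + z - 1) ≤ z - 1 := by
        rw [hτ, le_div_iff₀ hAz] at hxle; linarith
      have huz : u ≤ z := by
        have hAx : A * x ≤ (z - 1) * (1 - x) := by nlinarith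
        have : A * x / (1 - x) ≤ z - 1 := (div_le_iff₀ h1x).mpr (by linarith)
        rw [hu]; linarith
      have hφ := phi_antitone (Set.mem_Ici.mpr hu1) (Set.mem_Ici.mpr hz.le) huz
      simp only at hφ
      have hul : u * Real.log u ≤ u + A - 1 := by rw [hphiz] at hφ; linarith
      rw [sub_nonneg, le_div_iff₀ (mul_pos h1x hupos)]
      nlinarith [mul_le_mul_of_nonneg_left hul h1x.le]
    · intro hxge
      have hx' : z - 1 ≤ x * (A + z - 1) := by
        rw [hτ, div_le_iff₀ hAz] at hxge; linarith
      have huz : z ≤ u := by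
        have hAx : (z - 1) * (1 - x) ≤ A * x := by nlinarith
        have : z - 1 ≤ A * x / (1 - x) := (le_div_iff₀ h1x).mpr (by linarith)
        rw [hu]; linarith
      have hφ := phi_antitone (Set.mem_Ici.mpr hz.le) (Set.mem_Ici.mpr hu1) huz
      simp only at hφ
      have hul : u + A - 1 ≤ u * Real.log u := by rw [hphiz] at hφ; linarith
      rw [sub_nonpos, div_le_iff₀ (mul_pos h1x hupos)]
      nlinarith [mul_le_mul_of_nonneg_left hul h1x.le]
  have hwne : ∀ x : ℝ, 0 ≤ x → x < 1 → (1 + A * x / (1 - x)) ≠ 0 := by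
    intro x h0 h1
    have := hwge x h0 h1; linarith
  -- monotone on [0, τbullet]
  have hmono : MonotoneOn g (Icc 0 τbullet) := by
    apply monotoneOn_of_deriv_nonneg (convex_Icc _ _)
    · intro x hx
      have h1 : x < 1 := lt_of_le_of_lt hx.2 hτ1
      exact ((g_hasDeriv A x h1 (hwne x hx.1 h1)).continuousAt).continuousWithinAt
    · intro x hx
      rw [interior_Icc] at hx
      have h1 : x < 1 := lt_trans hx.2 hτ1
      exact ((g_hasDeriv A x h1 (hwne x hx.1.le h1)).differentiableAt).differentiableWithinAt
    · intro x hx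
      rw [interior_Icc] at hx
      have h1 : x < 1 := lt_trans hx.2 hτ1
      rw [(g_hasDeriv A x h1 (hwne x hx.1.le h1)).deriv]
      exact (hderiv_sign x hx.1.le h1).1 hx.2.le
  -- antitone on [τbullet, 1)
  have hanti : AntitoneOn g (Ico τbullet 1) := by
    apply antitoneOn_of_deriv_nonpos (convex_Ico _ _)
    · intro x hx
      exact ((g_hasDeriv A x hx.2 (hwne x (le_trans hτ0.le hx.1) hx.2)).continuousAt).continuousWithinAt
    · intro x hx
      rw [interior_Ico] at hx
      exact ((g_hasDeriv A x hx.2 (hwne x (le_trans hτ0.le hx.1.le) hx.2)).differentiableAt).differentiableWithinAt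
    · intro x hx
      rw [interior_Ico] at hx
      rw [(g_hasDeriv A x hx.2 (hwne x (le_trans hτ0.le hx.1.le) hx.2)).deriv]
      exact (hderiv_sign x (le_trans hτ0.le hx.1.le) hx.2).2 hx.1.le
  have hg0 : g 0 = 0 := by simp [hg]
  have hg1 : g 1 = 0 := by simp [hg]
  have hgτ : 0 ≤ g τbullet := by
    rw [← hg0]
    exact hmono (left_mem_Icc.mpr hτ0.le) ⟨hτ0.le, le_rfl⟩ hτ0.le
  have hlog2 : 0 < Real.log 2 := Real.log_pos one_lt_two
  have hred : ∀ c x : ℝ, g x ≤ g c →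
      (1 - x) * Real.logb 2 (1 + A * x / (1 - x)) ≤ (1 - c) * Real.logb 2 (1 + A * c / (1 - c)) := by
    intro c x h
    simp only [Real.logb, ← mul_div_assoc]
    exact div_le_div_of_nonneg_right h hlog2.le
  constructor
  · intro hle
    rw [isMaxOn_iff]
    intro x hx
    apply hred
    rcases le_or_gt x τbullet with hc | hc
    · exact hmono ⟨hx.1, hc⟩ ⟨hτ0.le, le_rfl⟩ hc
    · rcases lt_or_eq_of_le (le_trans hx.2 hμ1) with h1 | h1
      · exact hanti ⟨le_rfl, hτ1⟩ ⟨hc.le, h1⟩ hc.le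
      · rw [h1, hg1]; exact hgτ
  · intro hlt
    rw [isMaxOn_iff]
    intro x hx
    apply hred
    exact hmono ⟨hx.1, le_trans hx.2 hlt.le⟩ ⟨le_trans hx.1 hx.2, hlt.le⟩ hx.2
end

section
/- Under constraints E ≤ τ₁ P^max and E ≤ μ P^max with 0 < μ < 1, and objective (1−τ₁) log₂(1 + K E/(1−τ₁)) with K > 0: if the optimizer requires τ₁ > μ then the objective value is strictly smaller than the optimal value achievable with τ₁ = μ and E = μ P^max. -/
/-- For `0 < c` and `0 < t < s`, `t * log (1 + c/t) < s * log (1 + c/s)`. -/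
lemma key_log_mono (c t s : ℝ) (hc : 0 < c) (ht : 0 < t) (hts : t < s) :
    t * Real.log (1 + c / t) < s * Real.log (1 + c / s) := by
  have hs : 0 < s := ht.trans hts
  have hz : 0 < c / s := div_pos hc hs
  have hp : 1 < s / t := (one_lt_div ht).mpr hts
  have hB := one_add_mul_self_lt_rpow_one_add (by linarith : (-1:ℝ) ≤ c / s)
    (ne_of_gt hz) hp
  have hmul : s / t * (c / s) = c / t := by
    field_simp
  rw [hmul] at hB
  have h1 : (0:ℝ) < 1 + c / t := by positivity
  have h2 : (0:ℝ) < 1 + c / s := by positivity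
  have hlt := Real.log_lt_log h1 hB
  rw [Real.log_rpow h2] at hlt
  have h3 := (mul_lt_mul_iff_right₀ ht).mpr hlt
  calc t * Real.log (1 + c / t) < t * (s / t * Real.log (1 + c / s)) := h3
    _ = s * Real.log (1 + c / s) := by
        field_simp

/-- Lemma 2: with E ≤ τ₁ P^max and E ≤ μ P^max (0 < μ < 1, K > 0), any feasible
point with τ₁ > μ achieves a strictly smaller value of
(1−τ₁) log₂(1 + K E/(1−τ₁)) than the point τ₁ = μ, E = μ P^max. -/
theorem dc_time_beyond_mu_suboptimal
    (K Pmax μ : ℝ) (hK : 0 < K) (hP : 0 < Pmax) (hμ0 : 0 < μ) (hμ1 : μ < 1) :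
    ∀ τ₁ E : ℝ, μ < τ₁ → τ₁ ≤ 1 → 0 ≤ E → E ≤ τ₁ * Pmax → E ≤ μ * Pmax →
      (1 - τ₁) * Real.logb 2 (1 + K * E / (1 - τ₁)) <
        (1 - μ) * Real.logb 2 (1 + K * (μ * Pmax) / (1 - μ)) := by
  intro τ₁ E hμτ hτ1 hE0 hEτ hEμ
  have hs : (0:ℝ) < 1 - μ := by linarith
  have hc0 : 0 < K * (μ * Pmax) := by positivity
  have hRHS : 0 < (1 - μ) * Real.logb 2 (1 + K * (μ * Pmax) / (1 - μ)) := by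
    have : (1:ℝ) < 1 + K * (μ * Pmax) / (1 - μ) := by
      have : 0 < K * (μ * Pmax) / (1 - μ) := div_pos hc0 hs
      linarith
    exact mul_pos hs (Real.logb_pos one_lt_two this)
  rcases eq_or_lt_of_le hτ1 with h1 | h1
  · subst h1
    simpa using hRHS
  rcases eq_or_lt_of_le hE0 with hE | hE
  · rw [← hE]
    simpa using hRHS
  -- now 0 < 1 - τ₁ and 0 < E
  have ht : (0:ℝ) < 1 - τ₁ := by linarith
  have hts : 1 - τ₁ < 1 - μ := by linarith
  have hcE : 0 < K * E := by positivity
  have step1 : (1 - τ₁) * Real.logb 2 (1 + K * E / (1 - τ₁)) ≤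
      (1 - τ₁) * Real.logb 2 (1 + K * (μ * Pmax) / (1 - τ₁)) := by
    apply mul_le_mul_of_nonneg_left _ ht.le
    apply Real.logb_le_logb_of_le one_lt_two (by positivity)
    gcongr
  have step2 : (1 - τ₁) * Real.logb 2 (1 + K * (μ * Pmax) / (1 - τ₁)) <
      (1 - μ) * Real.logb 2 (1 + K * (μ * Pmax) / (1 - μ)) := by
    have hlog2 : (0:ℝ) < Real.log 2 := Real.log_pos one_lt_two
    have h := key_log_mono (K * (μ * Pmax)) (1 - τ₁) (1 - μ) hc0 ht hts
    rw [Real.logb, Real.logb, mul_div_assoc', mul_div_assoc']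
    gcongr
  exact lt_of_le_of_lt step1 step2
end
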